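/- arXiv:1901.00860 — 2 statements merged into one kernel-verified Lean document; each statement's English description precedes it below -/
import Mathlib

section
/- For every weakly superadditive game v, C(v) = {x_{v-v̂}} + ⋂_{∅≠B⊆N} C(v̂^B), where v̂ is the zero-normalization of v, v̂^B = v̂(B)·u_B + (v̂(N)-v̂(B))·u_N, and x_{v-v̂} = (v({i}))_{i∈N}. -/
/-!
Weak superadditivity makes `v̂` monotone, and `v̂ ∅ = 0`, so `v̂ ≥ 0`. Hence every `v̂^B` lies
below `v̂` with the same worth of `N`, giving `C(v̂) ⊆ C(v̂^B)`; conversely `v̂^A(A) = v̂(A)`, so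
a point of every `C(v̂^B)` meets all core constraints of `v̂`. Translation by `(v {i})ᵢ` carries
`C(v̂)` onto `C(v)`.
-/

open Finset

def coreGame {N : Type*} [Fintype N] [DecidableEq N] (v : Finset N → ℝ) : Set (N → ℝ) :=
  {x | ∑ i, x i = v univ ∧ ∀ A : Finset N, v A ≤ ∑ i ∈ A, x i}

def unanimity {N : Type*} [DecidableEq N] (A B : Finset N) : ℝ := if A ⊆ B then 1 else 0

def gameB {N : Type*} [Fintype N] [DecidableEq N] (v : Finset N → ℝ) (B A : Finset N) : ℝ :=
  v B * unanimity B A + (v univ - v B) * unanimity univ A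

def zeroNormalization {N : Type*} [DecidableEq N] (v : Finset N → ℝ) (A : Finset N) : ℝ :=
  v A - ∑ i ∈ A, v {i}

section Core

variable {N : Type*} [Fintype N] [DecidableEq N]

lemma coreGame_subset_of_le {v w : Finset N → ℝ} (hle : ∀ A, w A ≤ v A)
    (huniv : w univ = v univ) : coreGame v ⊆ coreGame w :=
  fun _ ⟨hsum, hA⟩ => ⟨hsum.trans huniv.symm, fun A => (hle A).trans (hA A)⟩

lemma add_mem_coreGame_iff (v : Finset N → ℝ) (x : N → ℝ) :
    (fun i => v {i}) + x ∈ coreGame v ↔ x ∈ coreGame (zeroNormalization v) := by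
  simp only [coreGame, zeroNormalization, Set.mem_ofPred_eq, Pi.add_apply, sum_add_distrib]
  refine and_congr ?_ (forall_congr' fun A => ?_) <;> constructor <;> intro h <;> linarith

lemma coreGame_eq_image_zeroNormalization (v : Finset N → ℝ) :
    coreGame v = (fun x => (fun i => v {i}) + x) '' coreGame (zeroNormalization v) := by
  ext x
  rw [Set.image_add_left, Set.mem_preimage, ← add_mem_coreGame_iff, add_neg_cancel_left]

lemma gameB_univ (w : Finset N → ℝ) (B : Finset N) : gameB w B univ = w univ := by
  simp [gameB, unanimity]

lemma gameB_self (w : Finset N → ℝ) (A : Finset N) : gameB w A A = w A := by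
  rcases eq_or_ne A univ with rfl | hA
  · exact gameB_univ w univ
  · simp [gameB, unanimity, univ_subset_iff, hA]

lemma gameB_le {w : Finset N → ℝ} (hw : Monotone w) (hw₀ : w ∅ = 0) (B A : Finset N) :
    gameB w B A ≤ w A := by
  rcases eq_or_ne A univ with rfl | hA
  · exact (gameB_univ w B).le
  have hnonneg : 0 ≤ w A := hw₀ ▸ hw (empty_subset A)
  by_cases hBA : B ⊆ A
  · simpa [gameB, unanimity, univ_subset_iff, hA, hBA] using hw hBA
  · simpa [gameB, unanimity, univ_subset_iff, hA, hBA] using hnonneg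

theorem coreGame_eq_iInter_coreGame_gameB {w : Finset N → ℝ} (hw : Monotone w)
    (hw₀ : w ∅ = 0) :
    coreGame w = ⋂ B ∈ {B : Finset N | B.Nonempty}, coreGame (gameB w B) := by
  refine Set.Subset.antisymm
    (Set.subset_iInter₂ fun B _ => coreGame_subset_of_le (gameB_le hw hw₀ B) (gameB_univ w B))
    fun x hx => ?_
  simp only [Set.mem_iInter₂, Set.mem_ofPred_eq] at hx
  refine ⟨?_, fun A => ?_⟩
  · rcases (univ : Finset N).eq_empty_or_nonempty with h | h
    · rw [h, sum_empty, hw₀]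
    · exact (hx univ h).1.trans (gameB_univ w univ)
  · rcases A.eq_empty_or_nonempty with rfl | hA
    · simp [hw₀]
    · simpa only [gameB_self] using (hx A hA).2 A

end Core

lemma monotone_zeroNormalization {N : Type*} [DecidableEq N] {v : Finset N → ℝ}
    (hws : ∀ (A : Finset N) (i : N), i ∉ A → v A + v {i} ≤ v (insert i A)) :
    Monotone (zeroNormalization v) :=
  Finset.monotone_iff_forall_le_insert.2 fun A i hi => by
    simp only [zeroNormalization, sum_insert hi]
    linarith [hws A i hi]

lemma zeroNormalization_empty {N : Type*} [DecidableEq N] {v : Finset N → ℝ} (hv : v ∅ = 0) :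
    zeroNormalization v ∅ = 0 := by
  simp [zeroNormalization, hv]

theorem stmt12 {N : Type*} [Fintype N] [DecidableEq N]
    (v : Finset N → ℝ) (hv : v ∅ = 0)
    (hws : ∀ (A : Finset N) (i : N), i ∉ A → v A + v {i} ≤ v (insert i A)) :
    coreGame v
      = (fun x => (fun i => v {i}) + x) ''
          (⋂ B ∈ {B : Finset N | B.Nonempty}, coreGame (gameB (zeroNormalization v) B)) := by
  rw [← coreGame_eq_iInter_coreGame_gameB (monotone_zeroNormalization hws)
    (zeroNormalization_empty hv)]
  exact coreGame_eq_image_zeroNormalization v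
end

section
/- Every game on a finite player set can be written as the difference of two nonnegative totally monotone games. -/
/-!
Möbius inversion writes `v A = ∑_{T ⊆ A} m T`, i.e. `v` is a signed combination of the unanimity
games `A ↦ [T ⊆ A]`. Each unanimity game is totally monotone by inclusion–exclusion, and total
monotonicity is preserved by nonnegative combinations, so splitting `m = m⁺ - m⁻` writes `v` as
the difference of two nonnegative totally monotone games, both vanishing at `∅` since
`m ∅ = v ∅ = 0`.
-/

open Finset

def TotallyMonotone {N : Type*} [DecidableEq N] (v : Finset N → ℝ) : Prop :=
  ∀ (k : ℕ), 2 ≤ k → ∀ A : Fin k → Finset N,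
    ∑ I ∈ ((univ : Finset (Fin k)).powerset.filter Finset.Nonempty).attach,
        (-1 : ℝ) ^ (I.1.card + 1) * v (I.1.inf' (Finset.mem_filter.mp I.2).2 A)
      ≤ v (univ.sup A)

namespace TotallyMonotone

variable {N : Type*} [DecidableEq N]

theorem const_mul {v : Finset N → ℝ} (hv : TotallyMonotone v) {c : ℝ} (hc : 0 ≤ c) :
    TotallyMonotone fun A => c * v A := by
  intro k hk A
  simp_rw [mul_left_comm _ c, ← mul_sum]
  exact mul_le_mul_of_nonneg_left (hv k hk A) hc

theorem sum {ι : Type*} {s : Finset ι} {v : ι → Finset N → ℝ}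
    (hv : ∀ i ∈ s, TotallyMonotone (v i)) : TotallyMonotone fun A => ∑ i ∈ s, v i A := by
  intro k hk A
  simp_rw [mul_sum]
  rw [sum_comm]
  exact sum_le_sum fun i hi => hv i hi k hk A

end TotallyMonotone

section Unanimity

variable {N : Type*} [DecidableEq N]

theorem totallyMonotone_unanimity (T : Finset N) :
    TotallyMonotone fun A => if T ⊆ A then (1 : ℝ) else 0 := by
  intro k _ A
  -- `T ⊆ A i` says `T ∈ Set.Iic (A i)`: apply inclusion–exclusion to these down-sets at `T`.
  calc _ = ∑ I ∈ (univ : Finset (Fin k)).powerset with I.Nonempty,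
          (-1 : ℤ) ^ (#I + 1) • (⋂ i ∈ I, Set.Iic (A i)).indicator (fun _ => (1 : ℝ)) T := by
        refine (sum_congr rfl fun I _ => ?_).trans (sum_attach _ _)
        simp [zsmul_eq_mul, Set.indicator, le_inf'_iff]
    _ = (⋃ i ∈ univ, Set.Iic (A i)).indicator (fun _ => (1 : ℝ)) T :=
        (indicator_biUnion_eq_sum_powerset _ _ _ _).symm
    _ ≤ (Set.Iic (univ.sup A)).indicator (fun _ => (1 : ℝ)) T :=
        Set.indicator_le_indicator_of_subset
          (Set.iUnion₂_subset fun i _ => Set.Iic_subset_Iic.mpr (le_sup (mem_univ i)))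
          (fun _ => zero_le_one) T
    _ = _ := by simp [Set.indicator_apply]

theorem totallyMonotone_sum_powerset [Fintype N] {c : Finset N → ℝ} (hc : 0 ≤ c) :
    TotallyMonotone fun A => ∑ T ∈ A.powerset, c T := by
  have hsum (A : Finset N) :
      ∑ T ∈ A.powerset, c T = ∑ T, c T * if T ⊆ A then 1 else 0 := by
    simp [← sum_filter, filter_subset_univ]
  simp_rw [hsum]
  exact TotallyMonotone.sum fun T _ => (totallyMonotone_unanimity T).const_mul (hc T)

end Unanimity

section Moebius

variable {N : Type*} [DecidableEq N]

theorem eq_zero_of_sum_powerset_eq_zero {G : Type*} [AddCommGroup G] {m : Finset N → G}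
    (h : ∀ A : Finset N, ∑ T ∈ A.powerset, m T = 0) : m = 0 := by
  funext A
  induction A using Finset.strongInduction with
  | H A ih =>
    have hsplit := add_sum_erase A.powerset m (mem_powerset_self A)
    rw [h A, sum_eq_zero (s := A.powerset.erase A) fun T hT => ih T (mem_ssubsets.mp hT),
      add_zero] at hsplit
    exact hsplit

variable {K : Type*} [Field K]

variable (N K) in
def zetaTransform : (Finset N → K) →ₗ[K] (Finset N → K) where
  toFun m A := ∑ T ∈ A.powerset, m T
  map_add' _ _ := by ext; simp [sum_add_distrib]
  map_smul' _ _ := by ext; simp [mul_sum]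

theorem zetaTransform_injective : Function.Injective (zetaTransform N K) :=
  (injective_iff_map_eq_zero _).mpr fun _ hm =>
    eq_zero_of_sum_powerset_eq_zero fun A => congrFun hm A

theorem exists_eq_sum_powerset [Fintype N] (v : Finset N → K) :
    ∃ m : Finset N → K, ∀ A, v A = ∑ T ∈ A.powerset, m T := by
  obtain ⟨m, hm⟩ := LinearMap.injective_iff_surjective.mp zetaTransform_injective v
  exact ⟨m, fun A => (congrFun hm A).symm⟩

end Moebius

theorem stmt16 {N : Type*} [Fintype N] [DecidableEq N]
    (v : Finset N → ℝ) (hv : v ∅ = 0) :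
    ∃ w₁ w₂ : Finset N → ℝ,
      w₁ ∅ = 0 ∧ w₂ ∅ = 0 ∧
      TotallyMonotone w₁ ∧ TotallyMonotone w₂ ∧
      (∀ A, 0 ≤ w₁ A) ∧ (∀ A, 0 ≤ w₂ A) ∧
      v = w₁ - w₂ := by
  obtain ⟨m, hm⟩ := exists_eq_sum_powerset v
  have hm_empty : m ∅ = 0 := by simpa [hv] using (hm ∅).symm
  refine ⟨fun A => ∑ T ∈ A.powerset, (m T)⁺, fun A => ∑ T ∈ A.powerset, (m T)⁻,
    by simp [hm_empty], by simp [hm_empty],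
    totallyMonotone_sum_powerset fun T => posPart_nonneg (m T),
    totallyMonotone_sum_powerset fun T => negPart_nonneg (m T),
    fun A => sum_nonneg fun T _ => posPart_nonneg (m T),
    fun A => sum_nonneg fun T _ => negPart_nonneg (m T), ?_⟩
  funext A
  simp [hm A, ← sum_sub_distrib, posPart_sub_negPart]
end
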